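/- arXiv:1502.03704 — 6 statements merged into one kernel-verified Lean document; each statement's English description precedes it below -/
import Mathlib

section
/- Let d and r be coprime positive integers, and let Π = r(r+d)(r+2d)⋯(r+(N-1)d). Suppose that for every prime p dividing Π we remove one term r+id of maximal p-adic valuation among the terms (each term removed at most once), and let M be the total number of removed terms. Then the product of the first N-M terms satisfies r(r+d)⋯(r+(N-1-M)d) ≤ (N-1)!. -/
/-!
Let `S` be the set of indices that survive the removal. For a prime `p` and `k ≥ 1`, the indices
`i < N` with `p ^ k ∣ r + i * d` all lie in one residue class mod `p ^ k` (as `p ∤ d`), so there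
are at most `(N - 1) / p ^ k + 1` of them; one of them, the index chosen for `p`, is removed. Hence
at most `(N - 1) / p ^ k` of them lie in `S`, and summing over `k` compares the `p`-adic valuation
of `∏ i ∈ S, (r + i * d)` with Legendre's formula for `(N - 1)!`: the product over `S` divides
`(N - 1)!`. Since the terms increase with `i`, the product of the first `#S = N - M` terms is at
most the product over `S`.
-/

open Finset
open scoped Nat

lemma Nat.prod_range_card_le_prod {g : ℕ → ℕ} (hg : Monotone g) (S : Finset ℕ) :
    ∏ i ∈ range #S, g i ≤ ∏ i ∈ S, g i := by
  induction S using Finset.induction_on_max with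
  | empty => simp
  | insert a s ha ih =>
    have has : a ∉ s := fun h => (ha a h).false
    have hcard : #s ≤ a := by
      simpa using card_le_card fun x hx => mem_range.2 (ha x hx)
    rw [card_insert_of_notMem has, prod_range_succ, prod_insert has, mul_comm]
    exact Nat.mul_le_mul (hg hcard) ih

lemma Nat.card_le_div_add_one_of_modEq {A : Finset ℕ} {q N : ℕ} (hA : A ⊆ range N)
    (hmod : ∀ i ∈ A, ∀ j ∈ A, i ≡ j [MOD q]) : #A ≤ (N - 1) / q + 1 := by
  have hinj : Set.InjOn (· / q) A := fun i hi j hj hij => by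
    rw [← Nat.div_add_mod i q, ← Nat.div_add_mod j q, hmod i hi j hj]
    exact congrArg (q * · + j % q) hij
  calc #A = #(A.image (· / q)) := (Finset.card_image_of_injOn hinj).symm
    _ ≤ #(range ((N - 1) / q + 1)) := card_le_card fun x hx => by
      obtain ⟨i, hi, rfl⟩ := mem_image.1 hx
      have := mem_range.1 (hA hi)
      exact mem_range.2 (Nat.lt_succ_of_le (Nat.div_le_div_right (by omega)))
    _ = (N - 1) / q + 1 := card_range _

section ArithmeticProgression

variable {r d q : ℕ}

lemma Nat.coprime_of_dvd_add_mul (hcop : Nat.gcd d r = 1) {i : ℕ} (hq : q ∣ r + i * d) :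
    q.Coprime d := by
  have hr : q.gcd d ∣ r :=
    (Nat.dvd_add_left ((Nat.gcd_dvd_right q d).mul_left i)).1 ((Nat.gcd_dvd_left q d).trans hq)
  exact Nat.eq_one_of_dvd_one (hcop ▸ Nat.dvd_gcd (Nat.gcd_dvd_right q d) hr)

lemma Nat.modEq_of_dvd_add_mul (hqd : q.Coprime d) {i j : ℕ} (hi : q ∣ r + i * d)
    (hj : q ∣ r + j * d) : i ≡ j [MOD q] :=
  Nat.ModEq.cancel_right_of_coprime hqd <| Nat.ModEq.add_left_cancel' r <|
    (Nat.modEq_zero_iff_dvd.2 hi).trans (Nat.modEq_zero_iff_dvd.2 hj).symm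

lemma Nat.card_filter_dvd_add_mul_le (hqd : q.Coprime d) (N : ℕ) :
    #{i ∈ range N | q ∣ r + i * d} ≤ (N - 1) / q + 1 :=
  Nat.card_le_div_add_one_of_modEq (filter_subset _ _) fun _ hi _ hj =>
    Nat.modEq_of_dvd_add_mul hqd (mem_filter.1 hi).2 (mem_filter.1 hj).2

end ArithmeticProgression

theorem Nat.prod_dvd_factorial_of_card_filter_pow_dvd_le {a : ℕ → ℕ} {S : Finset ℕ} {n : ℕ}
    (ha : ∀ i ∈ S, a i ≠ 0)
    (hcard : ∀ p k, p.Prime → k ≠ 0 → #{i ∈ S | p ^ k ∣ a i} ≤ n / p ^ k) :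
    ∏ i ∈ S, a i ∣ n ! := by
  rw [← Nat.factorization_le_iff_dvd (prod_ne_zero_iff.2 ha) n.factorial_ne_zero]
  intro p
  by_cases hp : p.Prime
  swap
  · simp [Nat.factorization_eq_zero_of_not_prime _ hp]
  have := Fact.mk hp
  set b := n + 1 + ∑ i ∈ S, a i
  have hlt : ∀ i ∈ S, a i < p ^ b := fun i hi =>
    (Nat.lt_pow_self hp.one_lt).trans_le <| Nat.pow_le_pow_right hp.pos <| by
      have := single_le_sum (fun j _ => Nat.zero_le (a j)) hi; omega
  calc (∏ i ∈ S, a i).factorization p = ∑ i ∈ S, #{k ∈ Ico 1 b | p ^ k ∣ a i} := by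
        rw [Nat.factorization_prod ha, Finsupp.finsetSum_apply]
        exact sum_congr rfl fun i hi =>
          Nat.factorization_eq_card_pow_dvd_of_lt hp (Nat.pos_of_ne_zero (ha i hi)) (hlt i hi)
    _ = ∑ k ∈ Ico 1 b, #{i ∈ S | p ^ k ∣ a i} := by simp only [card_filter]; exact sum_comm
    _ ≤ ∑ k ∈ Ico 1 b, n / p ^ k :=
      sum_le_sum fun k hk => hcard p k hp (by have := (mem_Ico.1 hk).1; omega)
    _ = (n !).factorization p := by
      rw [Nat.factorization_def _ hp, padicValNat_factorial]
      have := Nat.log_le_self p n; omega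

lemma card_filter_pow_dvd_sdiff_image_le {d r N : ℕ} (hr : 0 < r) (hcop : Nat.gcd d r = 1)
    {f : ℕ → ℕ} (hf : ∀ p ∈ (∏ i ∈ range N, (r + i * d)).primeFactors,
      f p < N ∧ ∀ j < N, padicValNat p (r + j * d) ≤ padicValNat p (r + f p * d))
    {p k : ℕ} (hp : p.Prime) (hk : k ≠ 0) :
    #{i ∈ range N \ (∏ i ∈ range N, (r + i * d)).primeFactors.image f | p ^ k ∣ r + i * d} ≤
      (N - 1) / p ^ k := by
  have := Fact.mk hp
  set A := {i ∈ range N \ (∏ i ∈ range N, (r + i * d)).primeFactors.image f |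
    p ^ k ∣ r + i * d}
  obtain hA | ⟨i, hi⟩ := A.eq_empty_or_nonempty
  · simp [hA]
  obtain ⟨hiR, hdvd⟩ := mem_filter.1 hi
  have hiN := (mem_sdiff.1 hiR).1
  have hpmem : p ∈ (∏ i ∈ range N, (r + i * d)).primeFactors :=
    Nat.mem_primeFactors.2 ⟨hp, (dvd_pow_self p hk).trans (hdvd.trans (dvd_prod_of_mem _ hiN)),
      prod_ne_zero_iff.2 fun _ _ => by positivity⟩
  obtain ⟨hfN, hmax⟩ := hf p hpmem
  -- The term of maximal valuation at `p` is a multiple of `p ^ k` too, and it has been removed.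
  have hfdvd : p ^ k ∣ r + f p * d := (padicValNat_dvd_iff_le (by positivity)).2 <|
    ((padicValNat_dvd_iff_le (by positivity)).1 hdvd).trans (hmax i (mem_range.1 hiN))
  have hfA : f p ∉ A := fun h => (mem_sdiff.1 (mem_filter.1 h).1).2 (mem_image_of_mem f hpmem)
  have hsub : insert (f p) A ⊆ {i ∈ range N | p ^ k ∣ r + i * d} := by
    refine insert_subset (mem_filter.2 ⟨mem_range.2 hfN, hfdvd⟩) fun j hj => ?_
    obtain ⟨hjN, hj⟩ := mem_filter.1 hj
    exact mem_filter.2 ⟨(mem_sdiff.1 hjN).1, hj⟩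
  have hcount : #A + 1 ≤ (N - 1) / p ^ k + 1 := by
    rw [← card_insert_of_notMem hfA]
    exact (card_le_card hsub).trans
      (Nat.card_filter_dvd_add_mul_le (Nat.coprime_of_dvd_add_mul hcop hdvd) N)
  omega

theorem erdos_elimination_inequality_general (d r N : ℕ) (hr : 0 < r)
    (hcop : Nat.gcd d r = 1)
    (f : ℕ → ℕ)
    (hf : ∀ p ∈ (∏ i ∈ Finset.range N, (r + i * d)).primeFactors,
      f p < N ∧ ∀ j < N, padicValNat p (r + j * d) ≤ padicValNat p (r + f p * d))
    (M : ℕ)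
    (hM : M = ((∏ i ∈ Finset.range N, (r + i * d)).primeFactors.image f).card) :
    ∏ i ∈ Finset.range (N - M), (r + i * d) ≤ Nat.factorial (N - 1) := by
  set removed := (∏ i ∈ range N, (r + i * d)).primeFactors.image f
  have hsub : removed ⊆ range N := image_subset_iff.2 fun p hp => mem_range.2 (hf p hp).1
  have hcard : #(range N \ removed) = N - M := by rw [card_sdiff_of_subset hsub, card_range, hM]
  calc ∏ i ∈ range (N - M), (r + i * d) = ∏ i ∈ range #(range N \ removed), (r + i * d) := by
        rw [hcard]
    _ ≤ ∏ i ∈ range N \ removed, (r + i * d) :=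
      Nat.prod_range_card_le_prod (fun a b hab => by gcongr) _
    _ ≤ (N - 1)! := Nat.le_of_dvd (Nat.factorial_pos _) <|
      Nat.prod_dvd_factorial_of_card_filter_pow_dvd_le (fun i _ => by positivity)
        fun _ _ hp hk => card_filter_pow_dvd_sdiff_image_le hr hcop hf hp hk

/-- Erdős-type elimination inequality: removing, for each prime factor of
`Π = r(r+d)⋯(r+(N-1)d)`, one term of maximal `p`-adic valuation (M removed terms
in total), the product of the first `N - M` terms is at most `(N-1)!`. -/
theorem erdos_elimination_inequality (d r N : ℕ) (hd : 0 < d) (hr : 0 < r) (hN : 0 < N)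
    (hcop : Nat.gcd d r = 1)
    (f : ℕ → ℕ)
    (hf : ∀ p ∈ (∏ i ∈ Finset.range N, (r + i * d)).primeFactors,
      f p < N ∧ ∀ j < N, padicValNat p (r + j * d) ≤ padicValNat p (r + f p * d))
    (M : ℕ)
    (hM : M = ((∏ i ∈ Finset.range N, (r + i * d)).primeFactors.image f).card) :
    ∏ i ∈ Finset.range (N - M), (r + i * d) ≤ Nat.factorial (N - 1) :=
  erdos_elimination_inequality_general d r N hr hcop f hf M hM
end

section
/- Let B be a finite set of positive integers and A ⊆ B·B a finite set such that there exist distinct primes p_1, …, p_M and distinct elements a_1, …, a_M ∈ A with the property that p_i divides a_i but p_i does not divide any other element of A. Then |B| ≥ M/2. -/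
/-!
A prime `p i` dividing `a i = b₁ * b₂` divides one of the factors `b ∈ B`, and `b ∣ a i`. Since
`p i` divides no element of `A` other than `a i`, distinct indices are sent to distinct factors,
so in fact `M ≤ |B|`.
-/

open scoped Pointwise

theorem Prime.exists_mem_dvd_of_mem_mul {α : Type*} [CommMonoidWithZero α] [DecidableEq α]
    {s t : Finset α} {p x : α} (hp : Prime p) (hx : x ∈ s * t) (hpx : p ∣ x) :
    ∃ b ∈ s ∪ t, p ∣ b ∧ b ∣ x := by
  obtain ⟨b₁, hb₁, b₂, hb₂, rfl⟩ := Finset.mem_mul.mp hx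
  rcases hp.dvd_mul.mp hpx with h | h
  · exact ⟨b₁, Finset.mem_union_left t hb₁, h, dvd_mul_right b₁ b₂⟩
  · exact ⟨b₂, Finset.mem_union_right s hb₂, h, dvd_mul_left b₂ b₁⟩

theorem injective_of_dvd_of_unique_dvd {ι α : Type*} [Semigroup α] {A : Set α}
    {p f a : ι → α} (hainj : Function.Injective a) (haA : ∀ i, a i ∈ A)
    (hpf : ∀ i, p i ∣ f i) (hfa : ∀ i, f i ∣ a i)
    (hnot : ∀ i, ∀ x ∈ A, x ≠ a i → ¬ p i ∣ x) :
    Function.Injective f := by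
  intro i j hij
  by_contra hne
  have hfj : f j ∣ a i := hij ▸ hfa i
  exact hnot j (a i) (haA i) (hainj.ne hne) ((hpf j).trans hfj)

theorem card_ge_of_unique_prime_divisors_general (B A : Finset ℕ)
    (hA : A ⊆ B * B)
    (M : ℕ) (p a : Fin M → ℕ)
    (hp : ∀ i, (p i).Prime)
    (hainj : Function.Injective a) (haA : ∀ i, a i ∈ A)
    (hdvd : ∀ i, p i ∣ a i)
    (hnot : ∀ i, ∀ x ∈ A, x ≠ a i → ¬ p i ∣ x) :
    M ≤ 2 * B.card := by
  have hfactor : ∀ i, ∃ b ∈ B, p i ∣ b ∧ b ∣ a i := fun i => by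
    simpa only [Finset.union_self] using
      (hp i).prime.exists_mem_dvd_of_mem_mul (hA (haA i)) (hdvd i)
  choose f hfB hpf hfa using hfactor
  have hf : Function.Injective f :=
    injective_of_dvd_of_unique_dvd hainj haA hpf hfa hnot
  have hM : M ≤ B.card := by
    simpa using Finset.card_le_card_of_injOn (s := Finset.univ) f (fun i _ => hfB i) hf.injOn
  omega

/-- If `A ⊆ B·B` and there are `M` distinct primes each dividing exactly one of `M`
distinct elements of `A`, then `|B| ≥ M/2`. -/
theorem card_ge_of_unique_prime_divisors (B A : Finset ℕ) (hBpos : ∀ b ∈ B, 0 < b)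
    (hA : A ⊆ B * B)
    (M : ℕ) (p a : Fin M → ℕ)
    (hp : ∀ i, (p i).Prime) (hpinj : Function.Injective p)
    (hainj : Function.Injective a) (haA : ∀ i, a i ∈ A)
    (hdvd : ∀ i, p i ∣ a i)
    (hnot : ∀ i, ∀ x ∈ A, x ≠ a i → ¬ p i ∣ x) :
    M ≤ 2 * B.card :=
  card_ge_of_unique_prime_divisors_general B A hA M p a hp hainj haA hdvd hnot
end

section
/- Let A be a set of N integers, let g = gcd of all elements of A, and suppose a/g < N^{K₁} for every a ∈ A. Suppose A ⊆ B·B for some finite set of integers B, and that the product ∏_{a∈A} (a/g) has at least M distinct prime factors exceeding K₂·N. Then |B| ≥ c(K₁,K₂)·M for some constant c(K₁,K₂) > 0 depending only on K₁ and K₂. -/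
/-!
For each `a ∈ A` fix a factorisation `a = x y` with `x, y ∈ B` and encode it as the vector
`[x] + [y] ∈ ℚ^(B ⊔ B)`. Some `S ⊆ A` with `|S| ≤ 2|B|` spans all these vectors. For an additive
function `f` and a constant `m`, the functional with weights `f x - m` on the first copy of `B` and
`f y` on the second sends the vector of `a` to `f a - m`; so if `f = m` on `S`, then `f = m` on `A`.
Taking `f = v_p` and `m = v_p(g)`: a prime dividing some `a/g` but no `e/g` with `e ∈ S` would give
`v_p(a) = v_p(g)`. Hence the large primes of `∏ a/g` are among those of the `e/g`, `e ∈ S`, and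
each `e/g < N^{K₁}` has `O_{K₁,K₂}(1)` prime factors above `K₂ N`, as their product is at least
`max(2, K₂ N)^k`.
-/

open scoped Pointwise
open Finset Module Real

theorem exists_finset_card_le_finrank_forall_mem_span {K V ι : Type*} [DivisionRing K]
    [AddCommGroup V] [Module K V] [Module.Finite K V] (u : ι → V) :
    ∃ S : Finset ι, #S ≤ finrank K V ∧ ∀ i, u i ∈ Submodule.span K (u '' S) := by
  obtain ⟨κ, a, ha, hspan, hli⟩ := exists_linearIndependent' K u
  have : Finite κ := hli.finite
  have := Fintype.ofFinite κ
  refine ⟨univ.map ⟨a, ha⟩, ?_, fun i => ?_⟩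
  · simpa using hli.fintype_card_le_finrank
  · have : u '' (univ.map ⟨a, ha⟩ : Finset ι) = Set.range (u ∘ a) := by
      ext; simp
    rw [this, hspan]
    exact Submodule.subset_span (Set.mem_range_self i)

theorem Finset.exists_subset_card_le_two_mul_of_subset_mul {α : Type*} (K : Type*) [Mul α]
    [DecidableEq α] [Field K] {A B : Finset α} (hAB : A ⊆ B * B) :
    ∃ S ⊆ A, #S ≤ 2 * #B ∧ ∀ (f : α → K) (m : K),
      (∀ x ∈ B, ∀ y ∈ B, x * y ∈ A → f (x * y) = f x + f y) →
      (∀ e ∈ S, f e = m) → ∀ a ∈ A, f a = m := by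
  have hfac (a : A) : ∃ x y : B, x.1 * y.1 = a := by
    obtain ⟨x, hx, y, hy, hxy⟩ := mem_mul.mp (hAB a.2)
    exact ⟨⟨x, hx⟩, ⟨y, hy⟩, hxy⟩
  choose l r hlr using hfac
  let u (a : A) : B ⊕ B → K := Pi.single (.inl (l a)) 1 + Pi.single (.inr (r a)) 1
  obtain ⟨S, hScard, hspan⟩ := exists_finset_card_le_finrank_forall_mem_span (K := K) u
  refine ⟨S.map (.subtype _), fun x hx => by obtain ⟨y, -, rfl⟩ := mem_map.mp hx; exact y.2,
    by simpa [two_mul] using hScard, ?_⟩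
  intro f m hf hS a ha
  let φ : (B ⊕ B → K) →ₗ[K] K := Fintype.linearCombination K (Sum.elim (f · - m) (f ·))
  have hφ (a : A) : φ (u a) = f a - m := by
    have := hf _ (l a).2 _ (r a).2 (hlr a ▸ a.2)
    simp only [φ, u, map_add, Fintype.linearCombination_apply_single, Sum.elim_inl, Sum.elim_inr,
      smul_eq_mul, one_mul, ← hlr a, this]
    ring
  have hker : u '' S ⊆ LinearMap.ker φ := by
    rintro _ ⟨e, he, rfl⟩
    simp [hφ, hS e (by simpa using he)]
  have := Submodule.span_le.mpr hker (hspan ⟨a, ha⟩)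
  simpa [hφ, sub_eq_zero] using this

theorem exists_subset_card_le_two_mul_factorization_eq {A B : Finset ℕ} (hA : ∀ a ∈ A, 0 < a)
    (hAB : A ⊆ B * B) :
    ∃ S ⊆ A, #S ≤ 2 * #B ∧ ∀ p m, (∀ e ∈ S, e.factorization p = m) →
      ∀ a ∈ A, a.factorization p = m := by
  obtain ⟨S, hSA, hSB, hS⟩ := exists_subset_card_le_two_mul_of_subset_mul ℚ hAB
  refine ⟨S, hSA, hSB, fun p m hm a ha => ?_⟩
  have hadd (x : ℕ) (_ : x ∈ B) (y : ℕ) (_ : y ∈ B) (hxy : x * y ∈ A) :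
      ((x * y).factorization p : ℚ) = x.factorization p + y.factorization p := by
    obtain ⟨hx, hy⟩ := mul_ne_zero_iff.mp (hA _ hxy).ne'
    simp [Nat.factorization_mul hx hy]
  exact_mod_cast hS (fun x => (x.factorization p : ℚ)) m hadd (fun e he => by simp [hm e he]) a ha

theorem exists_mem_primeFactors_div_of_mem_primeFactors_prod {A S : Finset ℕ} {g p : ℕ}
    (hA : ∀ a ∈ A, 0 < a) (hg : ∀ a ∈ A, g ∣ a) (hSA : S ⊆ A)
    (hS : ∀ p m, (∀ e ∈ S, e.factorization p = m) → ∀ a ∈ A, a.factorization p = m)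
    (hp : p ∈ (∏ a ∈ A, a / g).primeFactors) : ∃ e ∈ S, p ∈ (e / g).primeFactors := by
  have not_mem_iff {x : ℕ} (hx : x ∈ A) :
      p ∉ (x / g).primeFactors ↔ x.factorization p = g.factorization p := by
    have hx0 := (hA x hx).ne'
    have hle := (Nat.factorization_le_iff_dvd (ne_zero_of_dvd_ne_zero hx0 (hg x hx)) hx0).mpr
      (hg x hx) p
    rw [← Nat.support_factorization, Finsupp.notMem_support_iff, Nat.factorization_div (hg x hx),
      Finsupp.tsub_apply]
    omega
  obtain ⟨hp, hpdvd, hprod⟩ := Nat.mem_primeFactors.mp hp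
  obtain ⟨a, ha, hpa⟩ := hp.prime.exists_mem_finset_dvd hpdvd
  have hpa : p ∈ (a / g).primeFactors :=
    Nat.mem_primeFactors.mpr ⟨hp, hpa, prod_ne_zero_iff.mp hprod a ha⟩
  by_contra! hcon
  exact (not_mem_iff ha).mpr (hS p _ (fun e he => (not_mem_iff (hSA he)).mp (hcon e he)) a ha) hpa

theorem Nat.pow_card_filter_primeFactors_le {n : ℕ} (hn : n ≠ 0) (L : ℝ) :
    max 2 L ^ #(n.primeFactors.filter fun p : ℕ => L < p) ≤ n := by
  set F := n.primeFactors.filter fun p : ℕ => L < p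
  have hdvd : ∏ p ∈ F, p ∣ n :=
    (prod_dvd_prod_of_subset _ _ id (filter_subset _ _)).trans (Nat.prod_primeFactors_dvd n)
  calc max 2 L ^ #F = ∏ _p ∈ F, max 2 L := (prod_const _).symm
    _ ≤ ∏ p ∈ F, (p : ℝ) := by
      refine prod_le_prod (fun _ _ => by positivity) fun p hp => ?_
      obtain ⟨hp, hLp⟩ := mem_filter.mp hp
      exact max_le (mod_cast (Nat.prime_of_mem_primeFactors hp).two_le) hLp.le
    _ ≤ n := by rw [← Nat.cast_prod]; exact_mod_cast Nat.le_of_dvd (Nat.pos_of_ne_zero hn) hdvd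

theorem le_of_max_two_pow_lt_rpow {K₁ K₂ N : ℝ} (hK₁ : 0 < K₁) (hK₂ : 0 < K₂) (hN : 0 < N)
    {k : ℕ} (h : max 2 (K₂ * N) ^ k < N ^ K₁) :
    k ≤ 2 * K₁ + K₁ * |log (2 * K₂)| / log 2 := by
  set L := max 2 (K₂ * N)
  have hL2 : 2 ≤ L := le_max_left _ _
  have hlog2 : 0 < log 2 := log_pos one_lt_two
  have hlogL : log 2 ≤ log L := log_le_log two_pos hL2
  have hkL : k * log L < K₁ * log N := by
    simpa [log_pow, log_rpow hN] using log_lt_log (by positivity) h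
  -- `2 K₂ N ≤ 2 L ≤ L²`, so `N` is at most a constant times `L²`.
  have hNL : log N ≤ 2 * log L - log (2 * K₂) := by
    have : 2 * K₂ * N ≤ L ^ 2 := by nlinarith [le_max_right 2 (K₂ * N)]
    have := log_le_log (by positivity) this
    rw [log_mul (by positivity) hN.ne', log_pow] at this
    push_cast at this
    linarith
  have hrest : (k - 2 * K₁) * log L < K₁ * |log (2 * K₂)| := by
    nlinarith [neg_abs_le (log (2 * K₂))]
  by_cases hk : k ≤ 2 * K₁
  · have : 0 ≤ K₁ * |log (2 * K₂)| / log 2 := by positivity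
    linarith
  · have : (k - 2 * K₁) * log 2 < K₁ * |log (2 * K₂)| := by nlinarith
    rw [← lt_div_iff₀ hlog2] at this
    linarith

theorem card_filter_primeFactors_le {K₁ K₂ N : ℝ} (hK₁ : 0 < K₁) (hK₂ : 0 < K₂) (hN : 0 < N)
    {n : ℕ} (hn : (n : ℝ) < N ^ K₁) :
    #(n.primeFactors.filter fun p : ℕ => K₂ * N < p) ≤ 2 * K₁ + K₁ * |log (2 * K₂)| / log 2 := by
  rcases eq_or_ne n 0 with rfl | hn0
  · simp only [Nat.primeFactors_zero, filter_empty, card_empty, CharP.cast_eq_zero]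
    positivity
  exact le_of_max_two_pow_lt_rpow hK₁ hK₂ hN
    ((Nat.pow_card_filter_primeFactors_le hn0 _).trans_lt hn)

open Classical in
theorem card_filter_bind_natCast (s : Finset ℕ) (p : ℝ → Prop) :
    #{q ∈ (s >>= fun n => pure (n : ℝ)) | p q} = #(s.filter fun n : ℕ => p n) := by
  have : (s >>= fun n => pure (n : ℝ)) = s.image Nat.cast := by
    simp [Finset.bind_def, Finset.pure_def, Finset.sup_singleton_apply]
  rw [this, filter_image, card_image_of_injective _ Nat.cast_injective]

open Classical in
/-- If each `a/gcd(A)` is at most `N^{K₁}` and the product `∏ a/gcd(A)` has at least `M`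
distinct prime factors exceeding `K₂·N`, and `A ⊆ B·B`, then `|B| ≥ c(K₁,K₂)·M`. -/
theorem card_lower_bound_of_many_large_primes (K₁ K₂ : ℝ) (hK₁ : 0 < K₁) (hK₂ : 0 < K₂) :
    ∃ c : ℝ, 0 < c ∧ ∀ (A B : Finset ℕ) (M : ℕ), (∀ a ∈ A, 0 < a) →
      (∀ a ∈ A, ((a / A.gcd id : ℕ) : ℝ) < (A.card : ℝ) ^ K₁) →
      A ⊆ B * B →
      M ≤ (((∏ a ∈ A, a / A.gcd id).primeFactors).filter
            (fun q => K₂ * A.card < (q : ℝ))).card →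
      c * M ≤ (B.card : ℝ) := by
  set C := 2 * K₁ + K₁ * |log (2 * K₂)| / log 2
  refine ⟨(2 * C)⁻¹, by positivity, fun A B M hA hsmall hAB hM => ?_⟩
  set g := A.gcd id
  set large : ℕ → Finset ℕ := fun n => n.primeFactors.filter fun p : ℕ => K₂ * #A < p
  obtain ⟨S, hSA, hSB, hS⟩ := exists_subset_card_le_two_mul_factorization_eq hA hAB
  have hcover : large (∏ a ∈ A, a / g) ⊆ S.biUnion fun e => large (e / g) := by
    intro p hp
    obtain ⟨hp, hpA⟩ := mem_filter.mp hp
    obtain ⟨e, he, hpe⟩ := exists_mem_primeFactors_div_of_mem_primeFactors_prod hA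
      (fun a ha => gcd_dvd ha) hSA hS hp
    exact mem_biUnion.mpr ⟨e, he, mem_filter.mpr ⟨hpe, hpA⟩⟩
  have hM : (M : ℝ) ≤ 2 * C * #B := calc
    (M : ℝ) ≤ #(large (∏ a ∈ A, a / g)) := by
      rw [card_filter_bind_natCast] at hM
      exact_mod_cast hM
    _ ≤ ∑ e ∈ S, (#(large (e / g)) : ℝ) := by
      exact_mod_cast (card_le_card hcover).trans card_biUnion_le
    _ ≤ ∑ _e ∈ S, C := sum_le_sum fun e he => card_filter_primeFactors_le hK₁ hK₂
      (mod_cast card_pos.mpr ⟨e, hSA he⟩) (hsmall e (hSA he))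
    _ ≤ 2 * C * #B := by
      rw [sum_const, nsmul_eq_mul]
      nlinarith [show (#S : ℝ) ≤ 2 * #B from mod_cast hSB, show 0 ≤ C by positivity]
  rw [inv_mul_le_iff₀ (by positivity)]
  exact hM
end

section
/- Let K be a field, B a finite set of nonzero complex numbers, and A ⊆ B·B with A ⊆ K. Then there exists a set B' ⊆ K with |B'| ≤ 2|B| such that A ⊆ B'·B'. -/
open scoped Pointwise

/-!
Split `F` into orbits under multiplication by `Kˣ` and fix a representative `ρ x = orbitRep K x` of each orbit.
Then `x / ρ x` and `x * ρ x⁻¹` lie in `K`, and if `b * c ∈ K` is nonzero then `c⁻¹` lies in the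
orbit of `b`, so `ρ c⁻¹ = ρ b` and `(b / ρ b) * (c * ρ c⁻¹) = b * c`. Hence the at most `2 |B|`
elements `b / ρ b`, `b * ρ b⁻¹` (`b ∈ B`) of `K` cover every product `b * c ∈ K` with `b, c ∈ B`.
-/

namespace Subfield

variable {F : Type*} [Field F] (K : Subfield F)

noncomputable def orbitRep (x : F) : F :=
  (Quotient.mk (MulAction.orbitRel Kˣ F) x).out

theorem exists_units_mul_eq_orbitRep (x : F) : ∃ k : Kˣ, (k : F) * x = K.orbitRep x :=
  MulAction.mem_orbit_iff.mp (Quotient.mk_out (s := MulAction.orbitRel Kˣ F) x)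

theorem orbitRep_units_mul (k : Kˣ) (x : F) : K.orbitRep ((k : F) * x) = K.orbitRep x :=
  congrArg Quotient.out (Quotient.sound ⟨k, by simp [Units.smul_def, Subfield.smul_def]⟩)

theorem div_orbitRep_mem (x : F) : x / K.orbitRep x ∈ K := by
  obtain ⟨k, hk⟩ := K.exists_units_mul_eq_orbitRep x
  rcases eq_or_ne x 0 with rfl | hx
  · simp
  · rw [← hk, div_mul_cancel_right₀ hx]
    exact K.inv_mem k.val.2

theorem mul_orbitRep_inv_mem (x : F) : x * K.orbitRep x⁻¹ ∈ K := by
  obtain ⟨k, hk⟩ := K.exists_units_mul_eq_orbitRep x⁻¹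
  rcases eq_or_ne x 0 with rfl | hx
  · simp
  · rw [← hk, mul_left_comm, mul_inv_cancel₀ hx, mul_one]
    exact k.val.2

theorem div_orbitRep_mul_mul_orbitRep_inv {b c : F} (hbc : b * c ∈ K) :
    b / K.orbitRep b * (c * K.orbitRep c⁻¹) = b * c := by
  rcases eq_or_ne b 0 with rfl | hb
  · simp
  rcases eq_or_ne c 0 with rfl | hc
  · simp
  have hrep : K.orbitRep c⁻¹ = K.orbitRep b := by
    let u : Kˣ := (Units.mk0 ⟨b * c, hbc⟩ fun h ↦ mul_ne_zero hb hc (congrArg Subtype.val h))⁻¹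
    have hc_inv : c⁻¹ = (u : F) * b := by
      simp only [u, Units.val_inv_eq_inv_val, Units.val_mk0, Subfield.coe_inv]
      field_simp
    rw [hc_inv, orbitRep_units_mul]
  have hrep_ne : K.orbitRep b ≠ 0 := by
    obtain ⟨k, hk⟩ := K.exists_units_mul_eq_orbitRep b
    rw [← hk]
    exact mul_ne_zero (by simp) hb
  rw [hrep]
  field_simp

theorem exists_finset_card_le_two_mul_of_mul_mem [DecidableEq F] (B : Finset F) :
    ∃ B' : Finset F, (∀ b ∈ B', b ∈ K) ∧ B'.card ≤ 2 * B.card ∧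
      ∀ b ∈ B, ∀ c ∈ B, b * c ∈ K → b * c ∈ B' * B' := by
  refine ⟨B.image (fun b ↦ b / K.orbitRep b) ∪ B.image (fun c ↦ c * K.orbitRep c⁻¹), ?_, ?_, ?_⟩
  · simp only [Finset.mem_union, Finset.mem_image]
    rintro _ (⟨b, -, rfl⟩ | ⟨c, -, rfl⟩)
    exacts [K.div_orbitRep_mem b, K.mul_orbitRep_inv_mem c]
  · calc _ ≤ (B.image _).card + (B.image _).card := Finset.card_union_le _ _
      _ ≤ B.card + B.card := add_le_add Finset.card_image_le Finset.card_image_le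
      _ = 2 * B.card := (two_mul _).symm
  · intro b hb c hc hbc
    rw [← K.div_orbitRep_mul_mul_orbitRep_inv hbc]
    exact Finset.mul_mem_mul (Finset.mem_union_left _ (Finset.mem_image_of_mem _ hb))
      (Finset.mem_union_right _ (Finset.mem_image_of_mem _ hc))

end Subfield

theorem reduction_to_subfield_general (K : Subfield ℂ) (B A : Finset ℂ)
    (hA : A ⊆ B * B) (hAK : ∀ a ∈ A, a ∈ K) :
    ∃ B' : Finset ℂ, (∀ b ∈ B', b ∈ K) ∧ B'.card ≤ 2 * B.card ∧ A ⊆ B' * B' := by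
  obtain ⟨B', hB'K, hcard, hcover⟩ := K.exists_finset_card_le_two_mul_of_mul_mem B
  refine ⟨B', hB'K, hcard, fun a ha ↦ ?_⟩
  obtain ⟨b, hb, c, hc, rfl⟩ := Finset.mem_mul.mp (hA ha)
  exact hcover b hb c hc (hAK _ ha)

/-- If `A ⊆ B·B` with all elements of `A` in a subfield `K` of `ℂ`, then there is
`B' ⊆ K` with `|B'| ≤ 2|B|` and `A ⊆ B'·B'`. -/
theorem reduction_to_subfield (K : Subfield ℂ) (B A : Finset ℂ) (hB0 : ∀ b ∈ B, b ≠ 0)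
    (hA : A ⊆ B * B) (hAK : ∀ a ∈ A, a ∈ K) :
    ∃ B' : Finset ℂ, (∀ b ∈ B', b ∈ K) ∧ B'.card ≤ 2 * B.card ∧ A ⊆ B' * B' :=
  reduction_to_subfield_general K B A hA hAK
end

section
/- Let G be a bipartite graph with parts X and Y, each a copy of a finite set B of positive integers, where each edge (b₁, b₂) is labeled by the product b₁·b₂. Suppose there is a prime p and an integer D such that exactly one edge label a satisfies ord_p(a) > ord_p(D) while all other edge labels a' satisfy ord_p(a') = ord_p(D). Then G contains no cycle passing through the distinguished edge. -/
/-!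
Around a cycle `c₀ d₀ c₁ d₁ … c_{m-1} d_{m-1} c₀` every vertex lies on one edge `(c i, d i)`
and one edge `(c (i+1), d i)`, so the labels of the two families of edges have the same
product, and hence the same total `p`-adic valuation. The distinguished edge lies in exactly
one family; all other labels have valuation `ord_p D`, so that family has the strictly larger
total valuation.
-/

open Finset

section Cycle

variable {G : Type*} [AddGroup G] {c d : G → ℕ}

theorem sum_padicValNat_mul_comp_add_right [Fintype G] (p : ℕ) [Fact p.Prime] (s : G)
    (hc : ∀ i, c i ≠ 0) (hd : ∀ i, d i ≠ 0) :
    ∑ i, padicValNat p (c i * d i) = ∑ i, padicValNat p (c (i + s) * d i) := by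
  simp only [fun i => padicValNat.mul (p := p) (hc i) (hd i),
    fun i => padicValNat.mul (p := p) (hc (i + s)) (hd i), sum_add_distrib]
  rw [← Equiv.sum_comp (Equiv.addRight s) fun i => padicValNat p (c i)]
  rfl

theorem prod_mk_ne_prod_mk_comp_add_right (hc : Function.Injective c)
    (hd : Function.Injective d) {s : G} (hs : s ≠ 0) (i j : G) :
    (c i, d i) ≠ (c (j + s), d j) := by
  intro h
  obtain ⟨hcij, hdij⟩ := Prod.mk.inj h
  rw [hd hdij] at hcij
  exact hs (by simpa using hc hcij)

end Cycle

theorem sum_lt_sum_of_forall_ne_of_exists_eq {α ι M : Type*} [Fintype ι]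
    [AddCommMonoid M] [PartialOrder M] [IsOrderedCancelAddMonoid M]
    {E : Finset α} {e₀ : α} {w : α → M} {a : M}
    (hw₀ : a < w e₀) (hw : ∀ e ∈ E, e ≠ e₀ → w e = a)
    {f g : ι → α} (hf : ∀ i, f i ∈ E) (hf₀ : ∀ i, f i ≠ e₀) (hg : ∀ i, g i ∈ E)
    (hg₀ : ∃ i, g i = e₀) :
    ∑ i, w (f i) < ∑ i, w (g i) := by
  have hwf : ∀ i, w (f i) = a := fun i => hw _ (hf i) (hf₀ i)
  refine sum_lt_sum (fun i _ => ?_) ?_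
  · rw [hwf]
    by_cases h : g i = e₀
    · exact h ▸ hw₀.le
    · exact (hw _ (hg i) h).ge
  · obtain ⟨i, hi⟩ := hg₀
    exact ⟨i, mem_univ i, by rw [hwf, hi]; exact hw₀⟩

/-- A cycle of length `2m` is encoded by injective maps `c, d : ZMod m → ℕ` (the vertices in
the two parts) with edges `(c i, d i)` and `(c (i+1), d i)`. -/
theorem no_cycle_through_distinguished_edge_general (B : Finset ℕ) (hB : ∀ b ∈ B, 0 < b)
    (E : Finset (ℕ × ℕ)) (hE : ∀ e ∈ E, e.1 ∈ B ∧ e.2 ∈ B)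
    (p D : ℕ) (hp : p.Prime)
    (e₀ : ℕ × ℕ)
    (hval : padicValNat p D < padicValNat p (e₀.1 * e₀.2))
    (hval' : ∀ e ∈ E, e ≠ e₀ → padicValNat p (e.1 * e.2) = padicValNat p D) :
    ¬ ∃ (m : ℕ) (c d : ZMod m → ℕ), 2 ≤ m ∧
        Function.Injective c ∧ Function.Injective d ∧
        (∀ i, (c i, d i) ∈ E ∧ (c (i + 1), d i) ∈ E) ∧
        (∃ i, (c i, d i) = e₀ ∨ (c (i + 1), d i) = e₀) := by
  rintro ⟨m, c, d, hm, hc, hd, hEdge, i₀, hi₀⟩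
  have : NeZero m := ⟨by omega⟩
  have : Fact p.Prime := ⟨hp⟩
  have hone : (1 : ZMod m) ≠ 0 := fun h => by have := ZMod.one_eq_zero_iff.mp h; omega
  have hsum := sum_padicValNat_mul_comp_add_right p 1
    (fun i => (hB _ (hE _ (hEdge i).1).1).ne') (fun i => (hB _ (hE _ (hEdge i).1).2).ne')
  have hdisj := prod_mk_ne_prod_mk_comp_add_right hc hd hone
  have key (f g : ZMod m → ℕ × ℕ) := sum_lt_sum_of_forall_ne_of_exists_eq (f := f) (g := g)
    (w := fun e : ℕ × ℕ => padicValNat p (e.1 * e.2)) hval hval'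
  rcases hi₀ with h | h
  · exact (key _ _ (fun i => (hEdge i).2)
      (fun i => h ▸ (hdisj i₀ i).symm) (fun i => (hEdge i).1) ⟨i₀, h⟩).ne' hsum
  · exact (key _ _ (fun i => (hEdge i).1)
      (fun i => h ▸ hdisj i i₀) (fun i => (hEdge i).2) ⟨i₀, h⟩).ne hsum

/-- If exactly one edge label of a bipartite multiplication graph has `p`-adic valuation
exceeding that of `D` while all other edge labels have valuation equal to that of `D`,
then no cycle passes through the distinguished edge. A cycle of length `2m` is encoded by
injective maps `c, d : ZMod m → ℕ` (the vertices in the two parts) with edges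
`(c i, d i)` and `(c (i+1), d i)`. -/
theorem no_cycle_through_distinguished_edge (B : Finset ℕ) (hB : ∀ b ∈ B, 0 < b)
    (E : Finset (ℕ × ℕ)) (hE : ∀ e ∈ E, e.1 ∈ B ∧ e.2 ∈ B)
    (p D : ℕ) (hp : p.Prime) (hD : 0 < D)
    (e₀ : ℕ × ℕ) (he₀ : e₀ ∈ E)
    (hval : padicValNat p D < padicValNat p (e₀.1 * e₀.2))
    (hval' : ∀ e ∈ E, e ≠ e₀ → padicValNat p (e.1 * e.2) = padicValNat p D) :
    ¬ ∃ (m : ℕ) (c d : ZMod m → ℕ), 2 ≤ m ∧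
        Function.Injective c ∧ Function.Injective d ∧
        (∀ i, (c i, d i) ∈ E ∧ (c (i + 1), d i) ∈ E) ∧
        (∃ i, (c i, d i) = e₀ ∨ (c (i + 1), d i) = e₀) :=
  no_cycle_through_distinguished_edge_general B hB E hE p D hp e₀ hval hval'
end

section
/- Any bipartite graph on v vertices containing no cycle of length 2k has at most 100k·v^{1+1/k} edges. -/
/-!
Pass to a subgraph in which every vertex has more than `d = 100 k n^{1/k}` neighbours and grow
breadth-first layers `L₀, L₁, …` from one of its vertices `r`; since the graph is bipartite, every
edge joins two consecutive layers. For `i < k` there are at most `(2k + 1)(|Lᵢ| + |Lᵢ₊₁|)` edges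
between `Lᵢ` and `Lᵢ₊₁`. Otherwise they contain a subgraph of minimum degree `2k + 2`, enough to
extend paths greedily to length `2k` while avoiding two given vertices. In it one finds two
vertices of `Lᵢ` whose branches of the breadth-first tree first meet at some height `t`, joined by
a path of length `2k - 2t` inside `Lᵢ ∪ Lᵢ₊₁`; together with the two branches this path closes a
cycle of length `2k`. Counting degrees layer by layer then gives
`|Lⱼ₊₁| ≥ (d / (2k + 1) - 3) |Lⱼ|`, so `|Lₖ| > n`.
-/

open Finset

theorem Function.iterate_eq_of_iterate_eq_of_le {α : Type*} {f : α → α} {x y : α} {s t : ℕ}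
    (h : f^[s] x = f^[s] y) (hst : s ≤ t) : f^[t] x = f^[t] y := by
  obtain ⟨m, rfl⟩ := Nat.exists_eq_add_of_le hst
  rw [add_comm, Function.iterate_add_apply, Function.iterate_add_apply, h]

theorem Finset.exists_iterate_ne_of_iterate_eq {α : Type*} {f : α → α} {U : Finset α}
    {h : ℕ} (hU : ∀ x ∈ U, ∀ y ∈ U, f^[h] x = f^[h] y) {x y : α} (hx : x ∈ U) (hy : y ∈ U)
    (hxy : x ≠ y) :
    ∃ s < h, (∀ x ∈ U, ∀ y ∈ U, f^[s + 1] x = f^[s + 1] y) ∧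
      ∃ x ∈ U, ∃ y ∈ U, f^[s] x ≠ f^[s] y := by
  classical
  have hex : ∃ h, ∀ x ∈ U, ∀ y ∈ U, f^[h] x = f^[h] y := ⟨h, hU⟩
  obtain ⟨s, hs⟩ : ∃ s, Nat.find hex = s + 1 := by
    refine Nat.exists_eq_add_one.mpr (Nat.pos_of_ne_zero fun h0 => hxy ?_)
    simpa [h0] using Nat.find_spec hex x hx y hy
  refine ⟨s, by have := Nat.find_min' hex hU; omega, hs ▸ Nat.find_spec hex, ?_⟩
  simpa using Nat.find_min hex (m := s) (by omega)

theorem pow_mul_le_of_mul_le_add {ℓ : ℕ → ℝ} {c d : ℝ} {k : ℕ} (hc : 0 < c)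
    (hρ : 1 ≤ d / c - 3) (h₀ : ℓ 0 ≤ ℓ 1) (h₁ : d ≤ ℓ 1)
    (hrec : ∀ n, n + 1 < k → d * ℓ (n + 1) ≤ c * (ℓ n + 2 * ℓ (n + 1) + ℓ (n + 2))) :
    ∀ n < k, (d / c - 3) ^ n * d ≤ ℓ (n + 1) ∧ ℓ n ≤ ℓ (n + 1) := by
  have hd : 0 < d := by
    have := (le_div_iff₀ hc).mp (show 4 ≤ d / c by linarith)
    linarith
  intro n hn
  induction n with
  | zero => simpa using ⟨h₁, h₀⟩
  | succ n ih =>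
    obtain ⟨ih₁, ih₂⟩ := ih (by omega)
    have hpos : 0 < ℓ (n + 1) := lt_of_lt_of_le (by positivity) ih₁
    have hstep : (d / c - 3) * ℓ (n + 1) ≤ ℓ (n + 2) := by
      have : d * ℓ (n + 1) / c ≤ 3 * ℓ (n + 1) + ℓ (n + 2) := by
        rw [div_le_iff₀ hc]
        nlinarith [hrec n hn]
      rw [sub_mul, div_mul_eq_mul_div]
      linarith
    constructor
    · calc (d / c - 3) ^ (n + 1) * d = (d / c - 3) * ((d / c - 3) ^ n * d) := by ring
        _ ≤ (d / c - 3) * ℓ (n + 1) := by gcongr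
        _ ≤ ℓ (n + 2) := hstep
    · nlinarith

theorem one_le_sub_three_and_pow_lt {k : ℕ} (hk : 2 ≤ k) {x : ℝ} (hx : 1 ≤ x) :
    1 ≤ 100 * k * x / (2 * k + 1) - 3 ∧
      x ^ k < (100 * k * x / (2 * k + 1) - 3) ^ (k - 1) * (100 * k * x) := by
  have hk' : (2 : ℝ) ≤ k := by exact_mod_cast hk
  have hρ : x ≤ 100 * k * x / (2 * k + 1) - 3 := by
    have : 40 * x ≤ 100 * k * x / (2 * k + 1) := by
      rw [le_div_iff₀ (by positivity)]
      nlinarith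
    linarith
  refine ⟨hx.trans hρ, ?_⟩
  calc x ^ k = x ^ (k - 1) * x := by rw [← pow_succ, Nat.sub_add_cancel (by omega)]
    _ ≤ (100 * k * x / (2 * k + 1) - 3) ^ (k - 1) * x := by gcongr
    _ < (100 * k * x / (2 * k + 1) - 3) ^ (k - 1) * (100 * k * x) := by
      gcongr
      · exact pow_pos (by linarith) _
      · nlinarith

namespace SimpleGraph

variable {V : Type*}

section General

variable {G : SimpleGraph V} {u v : V}

theorem spanningCoe_induce_adj {s : Set V} :
    (G.induce s).spanningCoe.Adj u v ↔ G.Adj u v ∧ u ∈ s ∧ v ∈ s := by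
  simp

theorem Walk.mem_of_mem_support_spanningCoe_induce {s : Set V}
    (p : (G.induce s).spanningCoe.Walk u v) (hu : u ∈ s) {x : V} (hx : x ∈ p.support) :
    x ∈ s := by
  induction p with
  | nil => exact (List.mem_singleton.mp hx) ▸ hu
  | cons h _ ih =>
    rcases List.mem_cons.mp (Walk.support_cons _ _ ▸ hx) with rfl | hx
    · exact hu
    · exact ih (spanningCoe_induce_adj.mp h).2.2 hx

theorem Walk.IsPath.start_notMem_support_tail {p : G.Walk u v} (hp : p.IsPath) :
    u ∉ p.support.tail := by
  have := hp.support_nodup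
  rw [← Walk.cons_tail_support] at this
  exact (List.nodup_cons.mp this).1

theorem Walk.IsPath.append {w : V} {p : G.Walk u v} {q : G.Walk v w} (hp : p.IsPath)
    (hq : q.IsPath) (h : p.support.Disjoint q.support.tail) : (p.append q).IsPath := by
  rw [Walk.isPath_def, Walk.support_append, List.nodup_append']
  exact ⟨hp.support_nodup, hq.support_nodup.sublist (List.tail_sublist _), h⟩

theorem Walk.exists_adj_adj_ne {β : Type*} {A : Set V}
    (hA : ∀ ⦃a b⦄, G.Adj a b → (a ∈ A ↔ b ∉ A)) (f : V → β) :
    ∀ {x y : V} (p : G.Walk x y), x ∈ A → y ∈ A → f x ≠ f y →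
      ∃ w, ∃ x' ∈ p.support, ∃ y' ∈ p.support,
        x' ∈ A ∧ y' ∈ A ∧ G.Adj w x' ∧ G.Adj w y' ∧ f x' ≠ f y'
  | _, _, .nil, _, _, hf => (hf rfl).elim
  | _, _, .cons h .nil, hx, hy, _ => ((hA h).1 hx hy).elim
  | x, _, .cons h (.cons (v := z) h' p), hx, hy, hf => by
    have hz : z ∈ A := by grind
    by_cases hfz : f x = f z
    · obtain ⟨w, x', hx', y', hy', H⟩ := exists_adj_adj_ne hA f p hz hy (hfz ▸ hf)
      exact ⟨w, x', by simp [hx'], y', by simp [hy'], H⟩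
    · exact ⟨_, x, by simp, z, by simp, hx, hz, h.symm, h', hfz⟩

variable [DecidableRel G.Adj]

theorem sum_card_filter_adj_comm (A B : Finset V) :
    ∑ v ∈ A, #{w ∈ B | G.Adj v w} = ∑ w ∈ B, #{v ∈ A | G.Adj w v} := by
  refine (sum_card_bipartiteAbove_eq_sum_card_bipartiteBelow G.Adj).trans ?_
  simp_rw [bipartiteBelow, G.adj_comm _ (_ : V)]

theorem card_filter_spanningCoe_induce_adj {S : Finset V}
    [DecidableRel (G.induce (S : Set V)).spanningCoe.Adj] (hv : v ∈ S) :
    #{w ∈ S | (G.induce (S : Set V)).spanningCoe.Adj v w} = #{w ∈ S | G.Adj v w} := by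
  congr 1
  exact filter_congr fun w hw => by simp [hv, hw]

theorem degree_spanningCoe_induce [Fintype V] {S : Finset V}
    [DecidableRel (G.induce (S : Set V)).spanningCoe.Adj] (hv : v ∈ S) :
    (G.induce (S : Set V)).spanningCoe.degree v = #{w ∈ S | G.Adj v w} := by
  rw [← card_neighborFinset_eq_degree, neighborFinset_eq_filter]
  congr 1
  ext w
  simp [hv, and_comm]

variable [DecidableEq V]

theorem sum_card_filter_adj_erase {S : Finset V} (hv : v ∈ S) :
    ∑ w ∈ S.erase v, #{x ∈ S.erase v | G.Adj w x} + 2 * #{x ∈ S | G.Adj v x} =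
      ∑ w ∈ S, #{x ∈ S | G.Adj w x} := by
  have hdeg : #{x ∈ S | G.Adj v x} = ∑ w ∈ S.erase v, if G.Adj w v then 1 else 0 := by
    rw [← card_filter, filter_erase, erase_eq_of_notMem (by simp)]
    simp_rw [G.adj_comm _ v]
  have hsplit (w : V) : #{x ∈ S | G.Adj w x} =
      #{x ∈ S.erase v | G.Adj w x} + if G.Adj w v then 1 else 0 := by
    rw [← insert_erase hv, filter_insert]
    split_ifs
    · rw [card_insert_of_notMem (by simp), erase_insert (notMem_erase v S)]
    · rw [erase_insert (notMem_erase v S), add_zero]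
  rw [← add_sum_erase _ _ hv, hdeg]
  simp_rw [hsplit, sum_add_distrib]
  ring

theorem exists_subset_forall_lt_card_filter_adj (d : ℝ) :
    ∀ S : Finset V, 2 * d * #S < ∑ v ∈ S, (#{w ∈ S | G.Adj v w} : ℝ) →
      ∃ T ⊆ S, T.Nonempty ∧ ∀ v ∈ T, d < #{w ∈ T | G.Adj v w} := by
  intro S
  induction S using Finset.strongInduction with
  | _ S ih =>
    intro hS
    by_cases hall : ∀ v ∈ S, d < #{w ∈ S | G.Adj v w}
    · refine ⟨S, subset_rfl, nonempty_iff_ne_empty.mpr ?_, hall⟩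
      rintro rfl
      simp at hS
    push Not at hall
    obtain ⟨v, hv, hvd⟩ := hall
    have hsum : (∑ w ∈ S.erase v, #{x ∈ S.erase v | G.Adj w x} : ℝ) +
        2 * #{x ∈ S | G.Adj v x} = ∑ w ∈ S, (#{x ∈ S | G.Adj w x} : ℝ) := by
      exact_mod_cast sum_card_filter_adj_erase hv
    have hcard : (#(S.erase v) : ℝ) = #S - 1 := by
      rw [card_erase_of_mem hv, Nat.cast_sub (card_pos.mpr ⟨v, hv⟩), Nat.cast_one]
    obtain ⟨T, hTS, hT⟩ := ih (S.erase v) (erase_ssubset hv) (by rw [hcard]; linarith)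
    exact ⟨T, hTS.trans (erase_subset v S), hT⟩

theorem exists_isPath_of_le_card_filter_adj {T F : Finset V} {M : ℕ}
    (hdeg : ∀ v ∈ T, M ≤ #{w ∈ T | G.Adj v w}) (hv : v ∈ T \ F) :
    ∀ ℓ, ℓ + #F < M → ∃ (z : V) (p : G.Walk z v),
      p.IsPath ∧ p.length = ℓ ∧ ∀ x ∈ p.support, x ∈ T \ F
  | 0, _ => ⟨v, .nil, by simp, rfl, by simpa using hv⟩
  | ℓ + 1, hℓ => by
    obtain ⟨z, p, hp, hpl, hpT⟩ := exists_isPath_of_le_card_filter_adj hdeg hv ℓ (by omega)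
    have hz := mem_sdiff.mp (hpT z p.start_mem_support)
    have hcard : #(F ∪ p.support.toFinset) < #{w ∈ T | G.Adj z w} := by
      calc #(F ∪ p.support.toFinset) ≤ #F + p.support.length :=
            (card_union_le _ _).trans (add_le_add_right (List.toFinset_card_le _) _)
        _ < M := by rw [Walk.length_support]; omega
        _ ≤ _ := hdeg z hz.1
    obtain ⟨z', hz', hz'F⟩ := exists_mem_notMem_of_card_lt_card hcard
    rw [mem_filter] at hz'
    rw [mem_union, not_or, List.mem_toFinset] at hz'F
    refine ⟨z', .cons hz'.2.symm p, hp.cons hz'F.2, by simp [hpl], fun x hx => ?_⟩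
    rcases List.mem_cons.mp (Walk.support_cons _ p ▸ hx) with rfl | hx
    · exact mem_sdiff.mpr ⟨hz'.1, hz'F.1⟩
    · exact hpT x hx

end General

section Distance

variable {H : SimpleGraph V} {r u v : V}

theorem Colorable.even_dist_add_length_add_dist (hH : H.Colorable 2) (hu : H.Reachable r u)
    (p : H.Walk u v) : Even (H.dist r u + p.length + H.dist r v) := by
  obtain ⟨c⟩ := hH
  let c' : H.Coloring Bool := H.recolorOfEquiv finTwoEquiv c
  obtain ⟨pu, hpu⟩ := hu.exists_walk_length_eq_dist
  obtain ⟨pv, hpv⟩ := (hu.trans ⟨p⟩).exists_walk_length_eq_dist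
  have h₁ := c'.even_length_iff_congr (pu.append p)
  have h₂ := c'.even_length_iff_congr pv
  rw [Walk.length_append, hpu] at h₁
  rw [hpv] at h₂
  rw [Nat.even_add, h₁, h₂]

theorem Colorable.dist_ne_of_odd_length (hH : H.Colorable 2) (hu : H.Reachable r u)
    (p : H.Walk u v) (hp : Odd p.length) : H.dist r u ≠ H.dist r v := by
  intro heq
  have := hH.even_dist_add_length_add_dist hu p
  rw [heq, add_right_comm, ← two_mul] at this
  exact Nat.not_even_iff_odd.mpr hp ((Nat.even_add.mp this).mp (even_two_mul _))

theorem Colorable.dist_eq_add_one_or (hH : H.Colorable 2) (hu : H.Reachable r u)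
    (h : H.Adj u v) : H.dist r v = H.dist r u + 1 ∨ H.dist r u = H.dist r v + 1 := by
  have := hH.dist_ne_of_odd_length hu h.toWalk (by simp)
  rcases h.diff_dist_adj (u := r) with h' | h' | h' <;> omega

theorem exists_adj_dist_add_one (h : H.dist r v ≠ 0) :
    ∃ u, H.Adj v u ∧ H.dist r u + 1 = H.dist r v := by
  obtain ⟨p, hp⟩ := (Reachable.of_dist_ne_zero h).symm.exists_walk_length_eq_dist
  cases p with
  | nil => simp at h
  | cons hadj q =>
    refine ⟨_, hadj, le_antisymm ?_ ?_⟩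
    · have := H.dist_le q.reverse
      rw [dist_comm, ← hp, Walk.length_cons, Walk.length_reverse] at *
      omega
    · simpa [dist_eq_one_iff_adj.mpr hadj.symm] using hadj.symm.reachable.dist_triangle_right r

end Distance

def IsBFSParent (H : SimpleGraph V) (r : V) (P : V → V) : Prop :=
  ∀ ⦃v⦄, H.dist r v ≠ 0 → H.Adj v (P v) ∧ H.dist r (P v) + 1 = H.dist r v

theorem exists_isBFSParent (H : SimpleGraph V) (r : V) : ∃ P, H.IsBFSParent r P := by
  have (v : V) : ∃ u, H.dist r v ≠ 0 → H.Adj v u ∧ H.dist r u + 1 = H.dist r v := by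
    by_cases h : H.dist r v = 0
    · exact ⟨v, fun h' => (h' h).elim⟩
    · obtain ⟨u, hu⟩ := exists_adj_dist_add_one h
      exact ⟨u, fun _ => hu⟩
  choose P hP using this
  exact ⟨P, hP⟩

namespace IsBFSParent

variable {H : SimpleGraph V} {r u v : V} {P : V → V} (hP : H.IsBFSParent r P)
include hP

theorem dist_iterate_add {t : ℕ} (ht : t ≤ H.dist r v) :
    H.dist r (P^[t] v) + t = H.dist r v := by
  induction t generalizing v with
  | zero => rfl
  | succ t ih =>
    have hv := hP (v := v) (by omega)
    have := ih (v := P v) (by omega)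
    rw [Function.iterate_succ_apply]
    omega

theorem exists_walk_iterate {t : ℕ} (ht : t ≤ H.dist r v) :
    ∃ p : H.Walk v (P^[t] v), p.length = t ∧ ∀ x ∈ p.support, ∃ s ≤ t, x = P^[s] v := by
  induction t generalizing v with
  | zero => exact ⟨.nil, rfl, fun x hx => ⟨0, le_rfl, by simpa using hx⟩⟩
  | succ t ih =>
    have hv := hP (v := v) (by omega)
    obtain ⟨p, hp, hsupp⟩ := ih (v := P v) (by omega)
    refine ⟨.cons hv.1 p, by simp [hp], fun x hx => ?_⟩
    rcases List.mem_cons.mp (Walk.support_cons hv.1 p ▸ hx) with rfl | hx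
    · exact ⟨0, by omega, rfl⟩
    · obtain ⟨s, hs, rfl⟩ := hsupp x hx
      exact ⟨s + 1, by omega, rfl⟩

theorem iterate_dist (hv : H.Reachable r v) : P^[H.dist r v] v = r := by
  obtain ⟨p, -⟩ := hP.exists_walk_iterate le_rfl
  have := hP.dist_iterate_add (v := v) le_rfl
  exact ((hv.trans ⟨p⟩).dist_eq_zero_iff.mp (by omega)).symm

theorem exists_isPath_iterate (hv : H.Reachable r v) {t : ℕ} (ht : t ≤ H.dist r v) :
    ∃ p : H.Walk v (P^[t] v), p.IsPath ∧ p.length = t ∧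
      ∀ x ∈ p.support, ∃ s ≤ t, x = P^[s] v ∧ H.dist r x + s = H.dist r v := by
  obtain ⟨p, hp, hsupp⟩ := hP.exists_walk_iterate ht
  refine ⟨p, p.isPath_of_length_eq_dist (le_antisymm ?_ (H.dist_le p)), hp, fun x hx => ?_⟩
  · have := (hv.trans ⟨p⟩).dist_triangle_left v
    have := hP.dist_iterate_add ht
    rw [dist_comm (u := P^[t] v)] at *
    omega
  · obtain ⟨s, hs, rfl⟩ := hsupp x hx
    exact ⟨s, hs, rfl, hP.dist_iterate_add (by omega)⟩

theorem exists_isPath_of_iterate_eq (hu : H.Reachable r u) {t : ℕ} (ht : t < H.dist r u)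
    (hdist : H.dist r u = H.dist r v) (hmeet : P^[t + 1] u = P^[t + 1] v)
    (hne : P^[t] u ≠ P^[t] v) :
    ∃ q : H.Walk v u, q.IsPath ∧ q.length = 2 * (t + 1) ∧
      ∀ x ∈ q.support, H.dist r u ≤ H.dist r x → x = u ∨ x = v := by
  obtain ⟨pu, hpu, hpul, hpus⟩ := hP.exists_isPath_iterate (t := t + 1) hu ht
  obtain ⟨pv, hpv, hpvl, hpvs⟩ : ∃ p : H.Walk v (P^[t + 1] u),
      p.IsPath ∧ p.length = t + 1 ∧
        ∀ x ∈ p.support, ∃ s ≤ t + 1, x = P^[s] v ∧ H.dist r x + s = H.dist r v :=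
    hmeet ▸ hP.exists_isPath_iterate (Reachable.of_dist_ne_zero (by omega)) (hdist ▸ ht)
  have hbranches : ∀ x ∈ pv.support, x ∈ pu.support → x = P^[t + 1] u := by
    intro x hxv hxu
    obtain ⟨s, hs, rfl, hds⟩ := hpus x hxu
    obtain ⟨s', hs', hxs', hds'⟩ := hpvs _ hxv
    obtain rfl : s = s' := by omega
    by_contra hst
    exact hne (Function.iterate_eq_of_iterate_eq_of_le hxs' (by grind))
  refine ⟨pv.append pu.reverse, hpv.append hpu.reverse fun x hxv hxu => ?_, ?_,
    fun x hx hxd => ?_⟩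
  · obtain rfl := hbranches x hxv
      (List.mem_reverse.mp (pu.support_reverse ▸ List.mem_of_mem_tail hxu))
    exact hpu.reverse.start_notMem_support_tail hxu
  · simp only [Walk.length_append, Walk.length_reverse, hpul, hpvl]
    omega
  · rcases (Walk.mem_support_append_iff _ _).mp hx with hx | hx
    · obtain ⟨s, -, rfl, hds⟩ := hpvs x hx
      exact .inr (by rw [show s = 0 by omega]; rfl)
    · obtain ⟨s, -, rfl, hds⟩ := hpus x (List.mem_reverse.mp (pu.support_reverse ▸ hx))
      exact .inl (by rw [show s = 0 by omega]; rfl)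

theorem exists_isCycle_of_iterate_eq (hu : H.Reachable r u) {t : ℕ} (ht : t < H.dist r u)
    (hdist : H.dist r u = H.dist r v) (hmeet : P^[t + 1] u = P^[t + 1] v)
    (hne : P^[t] u ≠ P^[t] v) (Q : H.Walk u v) (hQ : Q.IsPath)
    (hQdist : ∀ x ∈ Q.support, H.dist r u ≤ H.dist r x) :
    ∃ (a : V) (c : H.Walk a a), c.IsCycle ∧ c.length = Q.length + 2 * (t + 1) := by
  obtain ⟨q, hq, hql, hqs⟩ := hP.exists_isPath_of_iterate_eq hu ht hdist hmeet hne
  refine ⟨u, Q.append q, hQ.isCycle_append hq (fun x hxQ hxq => ?_) (Or.inr (by omega)),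
    by rw [Walk.length_append, hql]⟩
  rcases hqs x (List.mem_of_mem_tail hxq) (hQdist x (List.mem_of_mem_tail hxQ)) with rfl | rfl
  · exact hQ.start_notMem_support_tail hxQ
  · exact hq.start_notMem_support_tail hxq

end IsBFSParent

section Layers

variable [Fintype V] {H : SimpleGraph V} {r v w : V} {i j : ℕ}

open Classical in
noncomputable def layer (H : SimpleGraph V) (r : V) (j : ℕ) : Finset V :=
  {v | H.Reachable r v ∧ H.dist r v = j}

theorem mem_layer : v ∈ H.layer r j ↔ H.Reachable r v ∧ H.dist r v = j := by
  simp [layer]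

theorem layer_zero : H.layer r 0 = {r} := by
  ext v
  simp only [mem_layer, mem_singleton]
  exact ⟨fun h => (h.1.dist_eq_zero_iff.mp h.2).symm, by rintro rfl; simp⟩

theorem card_layer_one [DecidableRel H.Adj] : #(H.layer r 1) = H.degree r := by
  rw [← card_neighborFinset_eq_degree]
  congr 1
  ext v
  simp only [mem_layer, mem_neighborFinset]
  exact ⟨fun h => dist_eq_one_iff_adj.mp h.2,
    fun h => ⟨h.reachable, dist_eq_one_iff_adj.mpr h⟩⟩

theorem disjoint_layer (h : i ≠ j) : Disjoint (H.layer r i) (H.layer r j) :=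
  Finset.disjoint_left.mpr fun _ hi hj => h ((mem_layer.mp hi).2.symm.trans (mem_layer.mp hj).2)

theorem Colorable.eq_add_one_or_of_adj (hH : H.Colorable 2) (hv : v ∈ H.layer r i)
    (hw : w ∈ H.layer r j) (h : H.Adj v w) : j = i + 1 ∨ i = j + 1 := by
  rw [mem_layer] at hv hw
  rw [← hv.2, ← hw.2]
  exact hH.dist_eq_add_one_or hv.1 h

theorem le_dist_of_mem_layer_union [DecidableEq V] (h : v ∈ H.layer r i ∪ H.layer r (i + 1)) :
    i ≤ H.dist r v := by
  rcases mem_union.mp h with h | h <;> rw [(mem_layer.mp h).2]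
  omega

theorem Colorable.mem_layer_iff_notMem_of_adj [DecidableEq V] (hH : H.Colorable 2)
    (hv : v ∈ H.layer r i ∪ H.layer r (i + 1)) (hw : w ∈ H.layer r i ∪ H.layer r (i + 1))
    (h : H.Adj v w) : v ∈ H.layer r i ↔ w ∉ H.layer r i := by
  have := Finset.disjoint_left.mp (disjoint_layer (H := H) (r := r) (show i ≠ i + 1 by omega))
  have := hH.eq_add_one_or_of_adj (r := r) (i := i) (j := i) (v := v) (w := w)
  have := hH.eq_add_one_or_of_adj (r := r) (i := i + 1) (j := i + 1) (v := v) (w := w)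
  grind

variable [DecidableRel H.Adj]

theorem Colorable.filter_adj_layer_self (hH : H.Colorable 2) (hv : v ∈ H.layer r i) :
    {w ∈ H.layer r i | H.Adj v w} = ∅ :=
  filter_false_of_mem fun w hw h => by have := hH.eq_add_one_or_of_adj hv hw h; omega

variable [DecidableEq V]

theorem Colorable.degree_eq_card_filter_adj_layer_add (hH : H.Colorable 2)
    (hv : v ∈ H.layer r (i + 1)) :
    H.degree v = #{w ∈ H.layer r i | H.Adj v w} + #{w ∈ H.layer r (i + 2) | H.Adj v w} := by
  rw [← card_union_of_disjoint (disjoint_filter_filter (disjoint_layer (by omega))),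
    ← filter_union, ← card_neighborFinset_eq_degree, neighborFinset_eq_filter]
  congr 1
  ext w
  simp only [mem_filter, mem_univ, true_and, mem_union, iff_and_self]
  intro h
  have hw : w ∈ H.layer r (H.dist r w) :=
    mem_layer.mpr ⟨(mem_layer.mp hv).1.trans h.reachable, rfl⟩
  rcases hH.eq_add_one_or_of_adj hv hw h with h' | h'
  · exact .inr (h' ▸ hw)
  · exact .inl ((Nat.succ_injective h').symm ▸ hw)

end Layers

section Cycles

variable [Fintype V] [DecidableEq V] {H : SimpleGraph V} [DecidableRel H.Adj] {r : V}
  {P : V → V} {i : ℕ} {T : Finset V}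

theorem IsBFSParent.exists_adj_adj_iterate_ne (hP : H.IsBFSParent r P) (hH : H.Colorable 2)
    (hT : T ⊆ H.layer r i ∪ H.layer r (i + 1)) (hTne : T.Nonempty)
    (hdeg : ∀ v ∈ T, 2 ≤ #{w ∈ T | H.Adj v w}) :
    ∃ s < i, ∃ w x y, (H.induce T).spanningCoe.Adj w x ∧ (H.induce T).spanningCoe.Adj w y ∧
      x ∈ H.layer r i ∧ y ∈ H.layer r i ∧ P^[s] x ≠ P^[s] y ∧
      ∀ z ∈ H.layer r i, (H.induce T).spanningCoe.Reachable w z →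
        P^[s + 1] z = P^[s + 1] x := by
  classical
  set R := (H.induce (T : Set V)).spanningCoe
  have hside ⦃a b : V⦄ (h : R.Adj a b) :
      a ∈ (H.layer r i : Set V) ↔ b ∉ (H.layer r i : Set V) := by
    obtain ⟨h, ha, hb⟩ := spanningCoe_induce_adj.mp h
    exact hH.mem_layer_iff_notMem_of_adj (hT ha) (hT hb) h
  have hnbr {v : V} (hv : v ∈ T) : 1 < #{u ∈ T | R.Adj v u} :=
    (card_filter_spanningCoe_induce_adj (G := H) hv).symm ▸ hdeg v hv
  obtain ⟨w₀, hw₀⟩ : ∃ w₀ ∈ T, w₀ ∉ H.layer r i := by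
    obtain ⟨x₀, hx₀⟩ := hTne
    by_cases hx : x₀ ∈ H.layer r i
    · obtain ⟨u, hu⟩ := card_pos.mp (zero_lt_one.trans (hnbr hx₀))
      exact ⟨u, (mem_filter.mp hu).1, (hside (mem_filter.mp hu).2).mp hx⟩
    · exact ⟨x₀, hx₀, hx⟩
  set U := {x ∈ H.layer r i | R.Reachable w₀ x}
  have hU : ∀ x ∈ U, ∀ y ∈ U, P^[i] x = P^[i] y := by
    intro x hx y hy
    obtain ⟨hxr, rfl⟩ := mem_layer.mp (mem_filter.mp hx).1
    obtain ⟨hyr, hyi⟩ := mem_layer.mp (mem_filter.mp hy).1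
    rw [hP.iterate_dist hxr, ← hyi, hP.iterate_dist hyr]
  obtain ⟨a, ha, b, hb, hab⟩ := one_lt_card.mp (hnbr hw₀.1)
  have hmemU {a : V} (ha : a ∈ {u ∈ T | R.Adj w₀ u}) : a ∈ U := by
    rw [mem_filter] at ha ⊢
    exact ⟨by grind, ha.2.reachable⟩
  obtain ⟨s, hs, hmerge, x, hx, y, hy, hxy⟩ :=
    exists_iterate_ne_of_iterate_eq hU (hmemU ha) (hmemU hb) hab
  rw [mem_filter] at hx hy
  obtain ⟨p⟩ := hx.2.symm.trans hy.2
  obtain ⟨w, x', hx', y', hy', hx'i, hy'i, hwx, hwy, hne⟩ :=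
    p.exists_adj_adj_ne hside (P^[s]) hx.1 hy.1 hxy
  have hw₀x' : R.Reachable w₀ x' := hx.2.trans (p.takeUntil x' hx').reachable
  refine ⟨s, hs, w, x', y', hwx, hwy, hx'i, hy'i, hne, fun z hz hwz => ?_⟩
  exact hmerge z (mem_filter.mpr ⟨hz, hw₀x'.trans (hwx.symm.reachable.trans hwz)⟩) x'
    (mem_filter.mpr ⟨hx'i, hw₀x'⟩)

theorem IsBFSParent.exists_isPath_across_branches (hP : H.IsBFSParent r P)
    (hH : H.Colorable 2) {k : ℕ} (hik : i < k) (hT : T ⊆ H.layer r i ∪ H.layer r (i + 1))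
    (hTne : T.Nonempty) (hdeg : ∀ v ∈ T, 2 * k + 2 ≤ #{w ∈ T | H.Adj v w}) :
    ∃ s < i, ∃ e ∈ H.layer r i, ∃ z ∈ H.layer r i, P^[s + 1] e = P^[s + 1] z ∧
      P^[s] e ≠ P^[s] z ∧ ∃ Q : H.Walk e z, Q.IsPath ∧ Q.length = 2 * (k - s - 1) ∧
        ∀ v ∈ Q.support, v ∈ T := by
  classical
  set R := (H.induce (T : Set V)).spanningCoe
  have hRH : R ≤ H := spanningCoe_induce_le H _
  obtain ⟨s, hsi, w, x, y, hwx, hwy, hxi, hyi, hxy, hmerge⟩ :=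
    hP.exists_adj_adj_iterate_ne hH hT hTne fun v hv => by have := hdeg v hv; omega
  obtain ⟨hwxH, hwT, hxT⟩ := spanningCoe_induce_adj.mp hwx
  have hwi : w ∉ H.layer r i := fun hw =>
    (hH.mem_layer_iff_notMem_of_adj (hT hwT) (hT hxT) hwxH).mp hw hxi
  have hwF : w ∈ T \ {x, y} := by
    refine mem_sdiff.mpr ⟨hwT, fun h => ?_⟩
    rcases mem_insert.mp h with rfl | h
    · exact hwi hxi
    · exact hwi (mem_singleton.mp h ▸ hyi)
  -- `e w p` will have length `2 (k - (s + 1))`; as `p` has odd length, it ends in the lower layer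
  obtain ⟨z, p, hp, hpl, hpT⟩ := exists_isPath_of_le_card_filter_adj (G := R) (M := 2 * k + 2)
    (fun v hv => (card_filter_spanningCoe_induce_adj (G := H) hv).symm ▸ hdeg v hv) hwF
    (2 * (k - s - 2) + 1) (by have := card_le_two (a := x) (b := y); omega)
  obtain ⟨hzT, -⟩ := mem_sdiff.mp (hpT z p.start_mem_support)
  have hzi : z ∈ H.layer r i := by
    refine (mem_union.mp (hT hzT)).resolve_right fun hz => ?_
    refine hH.dist_ne_of_odd_length (mem_layer.mp hz).1 (p.mapLe hRH) (by simp [hpl]) ?_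
    rw [(mem_layer.mp hz).2, (mem_layer.mp ((mem_union.mp (hT hwT)).resolve_left hwi)).2]
  obtain ⟨e, he, hew, hei, hne⟩ : ∃ e ∈ ({x, y} : Finset V),
      R.Adj e w ∧ e ∈ H.layer r i ∧ P^[s] e ≠ P^[s] z := by
    by_cases h : P^[s] x = P^[s] z
    · exact ⟨y, by simp, hwy.symm, hyi, fun h' => hxy (h.trans h'.symm)⟩
    · exact ⟨x, by simp, hwx.symm, hxi, h⟩
  let Q : R.Walk e z := .cons hew p.reverse
  refine ⟨s, hsi, e, hei, z, hzi,
    (hmerge e hei hew.symm.reachable).trans (hmerge z hzi ⟨p.reverse⟩).symm, hne, Q.mapLe hRH,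
    (hp.reverse.cons fun h => (mem_sdiff.mp (hpT e (by simpa using h))).2 he).mapLe hRH, ?_,
    fun v hv => Q.mem_of_mem_support_spanningCoe_induce (spanningCoe_induce_adj.mp hew).2.1
      (by simpa using hv)⟩
  simp only [Q, Walk.length_mapLe, Walk.length_cons, Walk.length_reverse, hpl]
  omega

theorem IsBFSParent.exists_isCycle_of_le_card_filter_adj (hP : H.IsBFSParent r P)
    (hH : H.Colorable 2) {k : ℕ} (hik : i < k) (hT : T ⊆ H.layer r i ∪ H.layer r (i + 1))
    (hTne : T.Nonempty) (hdeg : ∀ v ∈ T, 2 * k + 2 ≤ #{w ∈ T | H.Adj v w}) :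
    ∃ (a : V) (c : H.Walk a a), c.IsCycle ∧ c.length = 2 * k := by
  obtain ⟨s, hsi, e, hei, z, hzi, hmeet, hne, Q, hQ, hQl, hQT⟩ :=
    hP.exists_isPath_across_branches hH hik hT hTne hdeg
  rw [mem_layer] at hei hzi
  obtain ⟨a, c, hc, hcl⟩ := hP.exists_isCycle_of_iterate_eq hei.1 (hei.2 ▸ hsi)
    (hei.2.trans hzi.2.symm) hmeet hne Q hQ fun v hv =>
      hei.2 ▸ le_dist_of_mem_layer_union (hT (hQT v hv))
  exact ⟨a, c, hc, by omega⟩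

end Cycles

section Counting

variable [Fintype V] [DecidableEq V] {H : SimpleGraph V} [DecidableRel H.Adj] {r : V} {k : ℕ}

theorem Colorable.sum_card_filter_adj_layer_succ_le (hH : H.Colorable 2) {i : ℕ} (hik : i < k)
    (hcyc : ∀ (v : V) (c : H.Walk v v), c.IsCycle → c.length ≠ 2 * k) :
    ∑ v ∈ H.layer r i, #{w ∈ H.layer r (i + 1) | H.Adj v w} ≤
      (2 * k + 1) * (#(H.layer r i) + #(H.layer r (i + 1))) := by
  obtain ⟨P, hP⟩ := H.exists_isBFSParent r
  have hdisj := disjoint_layer (H := H) (r := r) (show i ≠ i + 1 by omega)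
  set S := H.layer r i ∪ H.layer r (i + 1)
  have hsum : ∑ v ∈ S, #{w ∈ S | H.Adj v w} =
      2 * ∑ v ∈ H.layer r i, #{w ∈ H.layer r (i + 1) | H.Adj v w} := by
    have h₁ : ∀ v ∈ H.layer r i,
        #{w ∈ S | H.Adj v w} = #{w ∈ H.layer r (i + 1) | H.Adj v w} := fun v hv => by
      rw [filter_union, hH.filter_adj_layer_self hv, empty_union]
    have h₂ : ∀ v ∈ H.layer r (i + 1),
        #{w ∈ S | H.Adj v w} = #{w ∈ H.layer r i | H.Adj v w} := fun v hv => by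
      rw [filter_union, hH.filter_adj_layer_self hv, union_empty]
    rw [sum_union hdisj, sum_congr rfl h₁, sum_congr rfl h₂, ← sum_card_filter_adj_comm,
      two_mul]
  by_contra! hlt
  obtain ⟨T, hTS, hTne, hTdeg⟩ := exists_subset_forall_lt_card_filter_adj (G := H)
    (2 * k + 1 : ℝ) S (by
      rw [card_union_of_disjoint hdisj]
      exact_mod_cast (show 2 * (2 * k + 1) * (#(H.layer r i) + #(H.layer r (i + 1))) <
        ∑ v ∈ S, #{w ∈ S | H.Adj v w} by rw [hsum, mul_assoc]; omega))
  obtain ⟨a, c, hc, hcl⟩ := hP.exists_isCycle_of_le_card_filter_adj hH hik hTS hTne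
    fun v hv => by exact_mod_cast hTdeg v hv
  exact hcyc a c hc hcl

theorem Colorable.pow_mul_le_card (hH : H.Colorable 2) (hk : 1 ≤ k)
    (hcyc : ∀ (v : V) (c : H.Walk v v), c.IsCycle → c.length ≠ 2 * k) {d : ℝ}
    (hdeg : ∀ v, H.Reachable r v → d < H.degree v) (hρ : 1 ≤ d / (2 * k + 1) - 3) :
    (d / (2 * k + 1) - 3) ^ (k - 1) * d ≤ Fintype.card V := by
  have hd : 0 < d := (div_pos_iff_of_pos_right (by positivity : (0 : ℝ) < 2 * k + 1)).mp
    (by linarith)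
  have hlayer₁ : d < #(H.layer r 1) := card_layer_one (H := H) (r := r) ▸ hdeg r .rfl
  have hrec (n : ℕ) (hn : n + 1 < k) : d * #(H.layer r (n + 1)) ≤ (2 * k + 1) *
      (#(H.layer r n) + 2 * #(H.layer r (n + 1)) + #(H.layer r (n + 2)) : ℝ) := by
    have hsum : ∑ v ∈ H.layer r (n + 1), H.degree v =
        ∑ v ∈ H.layer r n, #{w ∈ H.layer r (n + 1) | H.Adj v w} +
          ∑ v ∈ H.layer r (n + 1), #{w ∈ H.layer r (n + 2) | H.Adj v w} := by
      rw [sum_card_filter_adj_comm, ← sum_add_distrib]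
      exact sum_congr rfl fun v hv => hH.degree_eq_card_filter_adj_layer_add hv
    have h₁ := hH.sum_card_filter_adj_layer_succ_le (r := r) (i := n) (by omega) hcyc
    have h₂ := hH.sum_card_filter_adj_layer_succ_le (r := r) (i := n + 1) hn hcyc
    have hle : d * #(H.layer r (n + 1)) ≤ ∑ v ∈ H.layer r (n + 1), (H.degree v : ℝ) := by
      rw [mul_comm, ← nsmul_eq_mul, ← sum_const]
      exact sum_le_sum fun v hv => (hdeg v (mem_layer.mp hv).1).le
    have : (∑ v ∈ H.layer r (n + 1), H.degree v : ℝ) ≤ (2 * k + 1) *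
        (#(H.layer r n) + 2 * #(H.layer r (n + 1)) + #(H.layer r (n + 2)) : ℝ) := by
      exact_mod_cast (show _ ≤ (2 * k + 1) * (#(H.layer r n) + 2 * #(H.layer r (n + 1)) +
        #(H.layer r (n + 2))) by rw [hsum]; linarith)
    linarith
  obtain ⟨hk', -⟩ := pow_mul_le_of_mul_le_add (ℓ := fun j => (#(H.layer r j) : ℝ))
    (by positivity) hρ (by
      have : 0 < #(H.layer r 1) := by exact_mod_cast hd.trans hlayer₁
      simpa [layer_zero] using this) hlayer₁.le hrec (k - 1) (by omega)
  rw [Nat.sub_add_cancel hk] at hk'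
  exact hk'.trans (by exact_mod_cast card_le_univ _)

end Counting

theorem Colorable.card_edgeFinset_le [Fintype V] {G : SimpleGraph V} [DecidableRel G.Adj]
    (hG : G.Colorable 2) {k : ℕ} (hk : 1 ≤ k)
    (hcyc : ∀ (v : V) (c : G.Walk v v), c.IsCycle → c.length ≠ 2 * k) {d : ℝ}
    (hρ : 1 ≤ d / (2 * k + 1) - 3) (hV : Fintype.card V < (d / (2 * k + 1) - 3) ^ (k - 1) * d) :
    (#G.edgeFinset : ℝ) ≤ d * Fintype.card V := by
  classical
  by_contra! h
  obtain ⟨S, -, ⟨r, hr⟩, hS⟩ := exists_subset_forall_lt_card_filter_adj (G := G) d univ (by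
    have := G.sum_degrees_eq_twice_card_edges
    simp_rw [← card_neighborFinset_eq_degree, neighborFinset_eq_filter] at this
    rw [card_univ, ← Nat.cast_sum, this]
    push_cast
    linarith)
  set H := (G.induce (S : Set V)).spanningCoe
  have hHG : H ≤ G := spanningCoe_induce_le G _
  refine hV.not_ge (Colorable.pow_mul_le_card (hG.mono_left hHG) hk
    (fun v c hc => by simpa using hcyc v (c.mapLe hHG) (hc.mapLe hHG)) (r := r)
    (fun v ⟨p⟩ => ?_) hρ)
  have hvS := p.mem_of_mem_support_spanningCoe_induce hr p.end_mem_support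
  rw [degree_spanningCoe_induce hvS]
  exact hS v hvS

end SimpleGraph

/-- Bondy–Simonovits: a bipartite graph on `v` vertices with no cycle of length `2k` has at
most `100·k·v^{1+1/k}` edges. -/
theorem bondy_simonovits (V : Type*) [Fintype V] (G : SimpleGraph V) [DecidableRel G.Adj]
    (k : ℕ) (hk : 2 ≤ k) (hbip : G.Colorable 2)
    (hcyc : ∀ (v : V) (w : G.Walk v v), w.IsCycle → w.length ≠ 2 * k) :
    (G.edgeFinset.card : ℝ) ≤ 100 * k * (Fintype.card V : ℝ) ^ (1 + 1 / (k : ℝ)) := by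
  set n := Fintype.card V
  rcases Nat.eq_zero_or_pos n with hn | hn
  · have : IsEmpty V := Fintype.card_eq_zero_iff.mp hn
    rw [eq_empty_of_isEmpty G.edgeFinset, card_empty, Nat.cast_zero]
    positivity
  set x := (n : ℝ) ^ (1 / (k : ℝ))
  have hx : 1 ≤ x := Real.one_le_rpow (by exact_mod_cast hn) (by positivity)
  have hxk : x ^ k = n := by
    rw [← Real.rpow_natCast, ← Real.rpow_mul (by positivity), one_div_mul_cancel (by positivity),
      Real.rpow_one]
  obtain ⟨hρ, hlt⟩ := one_le_sub_three_and_pow_lt hk hx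
  calc (G.edgeFinset.card : ℝ) ≤ 100 * k * x * n :=
        hbip.card_edgeFinset_le (by omega) hcyc hρ (hxk ▸ hlt)
    _ = 100 * k * (n : ℝ) ^ (1 + 1 / (k : ℝ)) := by
      rw [Real.rpow_add (by positivity), Real.rpow_one]
      ring
end
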